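/- Let f(t) = 2 e^{t/4} ∫_{-∞}^{√(t/2)} (1/√(2π)) e^{-y²/2} dy. Then for all t ≥ 0, ∑_{k=0}^∞ (t/4)^{k/2} / Γ((k+2)/2) = f(t), i.e., the series ∑_{n=1}^∞ λ^{n-1}/Γ((n+1)/2) with λ = √(t/4) equals f(t). -/

import Mathlib

open MeasureTheory Real

/-- `f(t) = 2 e^{t/4} ∫_{-∞}^{√(t/2)} (1/√(2π)) e^{-y²/2} dy`. -/
noncomputable def fGauss (t : ℝ) : ℝ :=
  2 * Real.exp (t / 4) *
    ∫ y in Set.Iic (Real.sqrt (t / 2)), (Real.sqrt (2 * π))⁻¹ * Real.exp (-y ^ 2 / 2)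

/-!
By the duplication formula, `1 / Γ(k/2 + 1)` is a multiple of the Gaussian half-line moment
`∫_0^∞ s^k e^{-s²/2} ds` divided by `k!`. With `c = √(t/2)` the series is therefore
`(2/√(2π)) ∫_0^∞ e^{cs} e^{-s²/2} ds` (the terms are nonnegative, so sum and integral commute),
and completing the square, `cs - s²/2 = c²/2 - (s - c)²/2`, turns this integral into
`e^{t/4} ∫_{-∞}^{c} e^{-y²/2} dy`.
-/

open Set
open scoped Nat

theorem hasSum_pow_div_factorial_mul_integral_pow_mul {μ : Measure ℝ} {g : ℝ → ℝ} {c : ℝ}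
    (hc : ∀ᵐ s ∂μ, 0 ≤ c * s) (hint : Integrable (fun s ↦ exp (c * s) * g s) μ) :
    HasSum (fun k : ℕ ↦ c ^ k / k ! * ∫ s, s ^ k * g s ∂μ) (∫ s, exp (c * s) * g s ∂μ) := by
  have hg : AEStronglyMeasurable g μ := by
    have h : AEStronglyMeasurable (fun s ↦ exp (-(c * s)) * (exp (c * s) * g s)) μ :=
      (by fun_prop : Continuous fun s ↦ exp (-(c * s))).aestronglyMeasurable.mul
        hint.aestronglyMeasurable
    simpa [← mul_assoc, ← exp_add] using h
  have hexp (s : ℝ) : HasSum (fun k : ℕ ↦ (c * s) ^ k / k !) (exp (c * s)) := by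
    simpa [exp_eq_exp_ℝ] using NormedSpace.expSeries_div_hasSum_exp (c * s)
  have h := hasSum_integral_of_dominated_convergence (μ := μ)
    (F := fun k s ↦ (c * s) ^ k / k ! * g s) (f := fun s ↦ exp (c * s) * g s)
    (fun k s ↦ (c * s) ^ k / k ! * |g s|)
    (fun k ↦ (((continuous_const.mul continuous_id).pow k).div_const _).aestronglyMeasurable.mul hg)
    (fun k ↦ hc.mono fun s hs ↦ by
      rw [norm_mul, Real.norm_of_nonneg (by positivity), Real.norm_eq_abs])
    (ae_of_all _ fun s ↦ ((hexp s).mul_right _).summable)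
    (hint.norm.congr (ae_of_all _ fun s ↦ by
      simp [((hexp s).mul_right |g s|).tsum_eq, abs_of_pos (exp_pos _)]))
    (ae_of_all _ fun s ↦ (hexp s).mul_right _)
  have hterm (k : ℕ) :
      ∫ s, (c * s) ^ k / k ! * g s ∂μ = c ^ k / k ! * ∫ s, s ^ k * g s ∂μ := by
    rw [← integral_const_mul]
    congr 1 with s
    ring
  simpa only [hterm] using h

theorem integral_Ioi_comp_sub_left {E : Type*} [NormedAddCommGroup E] [NormedSpace ℝ E]
    (g : ℝ → E) (a c : ℝ) : ∫ s in Ioi a, g (c - s) = ∫ y in Iic (c - a), g y := by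
  have h := (Measure.measurePreserving_sub_left volume c).setIntegral_preimage_emb
    (MeasurableEquiv.subLeft c).measurableEmbedding g (Iic (c - a))
  have hpre : (fun s ↦ c - s) ⁻¹' Iic (c - a) = Ici a := by ext s; simp
  rw [← h, hpre, integral_Ici_eq_integral_Ioi]

theorem integral_Ioi_pow_mul_exp_neg_sq_div_two (k : ℕ) :
    ∫ s in Ioi 0, s ^ k * exp (-s ^ 2 / 2) = 2 ^ (((k : ℝ) - 1) / 2) * Gamma ((k + 1) / 2) := by
  have h := integral_rpow_mul_exp_neg_mul_rpow two_pos
    (by linarith [k.cast_nonneg (α := ℝ)] : -1 < (k : ℝ)) (one_half_pos (α := ℝ))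
  have hcoeff : (1 / 2 : ℝ) ^ (-((k : ℝ) + 1) / 2) * (1 / 2) = 2 ^ (((k : ℝ) - 1) / 2) := by
    rw [one_div, inv_rpow zero_le_two, ← rpow_neg zero_le_two, ← rpow_neg_one 2,
      ← rpow_add two_pos]
    ring_nf
  simp only [rpow_natCast, rpow_two, neg_mul, one_div_mul_eq_div] at h
  simp only [neg_div]
  rw [h, hcoeff]

theorem Gamma_mul_Gamma_add_half_nat (k : ℕ) :
    Gamma ((k + 1) / 2) * Gamma ((k + 2) / 2) = k ! * √π / 2 ^ k := by
  have h := Gamma_mul_Gamma_add_half ((k + 1) / 2)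
  rw [show ((k : ℝ) + 1) / 2 + 1 / 2 = (k + 2) / 2 by ring,
    show 2 * (((k : ℝ) + 1) / 2) = k + 1 by ring, Gamma_nat_eq_factorial,
    show 1 - ((k : ℝ) + 1) = -k by ring, rpow_neg zero_le_two, rpow_natCast] at h
  rw [h, div_eq_mul_inv]
  ring

theorem rpow_div_two_div_Gamma_eq_mul_integral (x : ℝ) (hx : 0 ≤ x) (k : ℕ) :
    x ^ ((k : ℝ) / 2) / Gamma ((k + 2) / 2) =
      2 / √(2 * π) * (√(2 * x) ^ k / k ! * ∫ s in Ioi 0, s ^ k * exp (-s ^ 2 / 2)) := by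
  have hsqrt : √(2 * x) ^ k = 2 ^ ((k : ℝ) / 2) * x ^ ((k : ℝ) / 2) := by
    rw [sqrt_eq_rpow, ← rpow_natCast, ← rpow_mul (by positivity), mul_rpow zero_le_two hx]
    ring_nf
  have htwo : (2 : ℝ) ^ ((k : ℝ) / 2) * 2 ^ (((k : ℝ) - 1) / 2) * 2 = 2 ^ k * √2 := by
    rw [sqrt_eq_rpow, ← rpow_natCast, ← rpow_add two_pos, ← rpow_add_one two_ne_zero,
      ← rpow_add two_pos]
    ring_nf
  have hdup : Gamma ((k + 1) / 2) * Gamma ((k + 2) / 2) * 2 ^ k = k ! * √π := by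
    rw [Gamma_mul_Gamma_add_half_nat]
    field_simp
  have hΓ : 0 < Gamma ((k + 2) / 2) := Gamma_pos_of_pos (by positivity)
  rw [integral_Ioi_pow_mul_exp_neg_sq_div_two, hsqrt, sqrt_mul zero_le_two]
  field_simp
  linear_combination (-x ^ ((k : ℝ) / 2) * Gamma ((k + 1) / 2) * Gamma ((k + 2) / 2)) * htwo
    - x ^ ((k : ℝ) / 2) * √2 * hdup

theorem integrable_exp_mul_mul_exp_neg_sq_div_two (c : ℝ) :
    Integrable fun s ↦ exp (c * s) * exp (-s ^ 2 / 2) := by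
  refine (((integrable_exp_neg_mul_sq one_half_pos).comp_sub_right c).const_mul
    (exp (c ^ 2 / 2))).congr (ae_of_all _ fun s ↦ ?_)
  simp only [← exp_add]
  congr 1
  ring

theorem integral_Ioi_exp_mul_mul_exp_neg_sq_div_two (c : ℝ) :
    ∫ s in Ioi 0, exp (c * s) * exp (-s ^ 2 / 2) =
      exp (c ^ 2 / 2) * ∫ y in Iic c, exp (-y ^ 2 / 2) := by
  rw [← sub_zero c, ← integral_Ioi_comp_sub_left, ← integral_const_mul, sub_zero]
  congr 1 with s
  simp only [← exp_add]
  congr 1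
  ring

/-- For all `t ≥ 0`, `∑_{k=0}^∞ (t/4)^{k/2} / Γ((k+2)/2) = f(t)`. -/
theorem series_eq_fGauss (t : ℝ) (ht : 0 ≤ t) :
    (∑' k : ℕ, (t / 4) ^ ((k : ℝ) / 2) / Real.Gamma ((k + 2) / 2)) = fGauss t := by
  have hterm (k : ℕ) : (t / 4) ^ ((k : ℝ) / 2) / Gamma ((k + 2) / 2) =
      2 / √(2 * π) * (√(t / 2) ^ k / k ! * ∫ s in Ioi 0, s ^ k * exp (-s ^ 2 / 2)) := by
    rw [rpow_div_two_div_Gamma_eq_mul_integral _ (by positivity),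
      show 2 * (t / 4) = t / 2 by ring]
  have hsum := hasSum_pow_div_factorial_mul_integral_pow_mul (c := √(t / 2))
    (g := fun s ↦ exp (-s ^ 2 / 2))
    ((ae_restrict_mem measurableSet_Ioi).mono fun s hs ↦ mul_nonneg (sqrt_nonneg _) hs.le)
    (integrable_exp_mul_mul_exp_neg_sq_div_two _).integrableOn
  rw [tsum_congr hterm, tsum_mul_left, hsum.tsum_eq, integral_Ioi_exp_mul_mul_exp_neg_sq_div_two,
    fGauss, integral_const_mul, sq_sqrt (by positivity), div_div,
    show (2 : ℝ) * 2 = 4 by norm_num]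
  ring
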